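/- Let (θ_n) be any sequence of real numbers, let λ > 0, and let A > 1. Then there exists a real number α with A ≤ α ≤ A + A/(λ(A-1)) such that for every n ≥ 1, the distance from λα^n to the nearest integer differs from θ_n by at most 1/(2(A-1)), i.e., ‖λα^n − θ_n‖ ≤ 1/(2(A-1)). -/

import Mathlib

/-- For a real number `x`, the distance from `x` to the nearest integer. -/
noncomputable def distNearestInt (x : ℝ) : ℝ := |x - round x|

/-!
Nested intervals. Put `δ = 1 / (2 (A - 1))`, so that `A · 2δ = 1 + 2δ`. Start from
`[A, A + A / (λ (A - 1))]`, whose image under `x ↦ λ x` has length `1 + 2δ`. If the image of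
`[a, b]` (with `a ≥ A`) under `x ↦ λ x ^ n` has length at least `1 + 2δ`, it contains a window
`[m + θ n - δ, m + θ n + δ]` with `m ∈ ℤ`; its preimage `[a', b']` is the next interval. Since
`b' ^ (n + 1) - a' ^ (n + 1) ≥ a' (b' ^ n - a' ^ n) ≥ A (b' ^ n - a' ^ n)`, the image of `[a', b']`
under `x ↦ λ x ^ (n + 1)` has length at least `A · 2δ = 1 + 2δ` again. Any point `α` of the
intersection of all intervals works.
-/

open Set

theorem distNearestInt_le_abs_sub_intCast (x : ℝ) (m : ℤ) : distNearestInt x ≤ |x - m| :=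
  round_le x m

theorem exists_seq_of_forall_exists_succ {α : Type*} {P : ℕ → α → Prop} {R : ℕ → α → α → Prop}
    {x₀ : α} (h₀ : P 0 x₀) (step : ∀ k x, P k x → ∃ y, P (k + 1) y ∧ R k x y) :
    ∃ f : ℕ → α, f 0 = x₀ ∧ ∀ k, P k (f k) ∧ R k (f k) (f (k + 1)) := by
  choose next hnextP hnextR using step
  let F : ∀ k, {x // P k x} := fun k =>
    Nat.rec ⟨x₀, h₀⟩ (fun k x => ⟨next k x.1 x.2, hnextP k x.1 x.2⟩) k
  exact ⟨fun k => (F k).1, rfl, fun k => ⟨(F k).2, hnextR k _ _⟩⟩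

theorem mul_sub_pow_le_sub_pow_succ {R : Type*} [CommRing R] [LinearOrder R]
    [IsStrictOrderedRing R] {a b : R} (ha : 0 ≤ a) (hab : a ≤ b) (n : ℕ) :
    a * (b ^ n - a ^ n) ≤ b ^ (n + 1) - a ^ (n + 1) := by
  have hpow : a ^ n ≤ b ^ n := pow_le_pow_left₀ ha hab n
  calc a * (b ^ n - a ^ n) ≤ b * (b ^ n - a ^ n) + (b - a) * a ^ n := by
        nlinarith [pow_nonneg ha n]
    _ = b ^ (n + 1) - a ^ (n + 1) := by ring

theorem exists_int_add_Icc_subset {u v t δ : ℝ} (h : u + 2 * δ + 1 ≤ v) :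
    ∃ m : ℤ, u ≤ m + t - δ ∧ m + t + δ ≤ v := by
  refine ⟨⌈u + δ - t⌉, ?_, ?_⟩
  · linarith [Int.le_ceil (u + δ - t)]
  · linarith [Int.ceil_lt_add_one (u + δ - t)]

theorem exists_Icc_subset_eq_of_monotoneOn {f : ℝ → ℝ} {a b c d : ℝ} (hab : a ≤ b)
    (hf : ContinuousOn f (Icc a b)) (hmono : MonotoneOn f (Icc a b)) (hcd : c < d)
    (hc : f a ≤ c) (hd : d ≤ f b) :
    ∃ a' b', a ≤ a' ∧ a' ≤ b' ∧ b' ≤ b ∧ f a' = c ∧ f b' = d := by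
  obtain ⟨a', ha', rfl⟩ := intermediate_value_Icc hab hf ⟨hc, hcd.le.trans hd⟩
  obtain ⟨b', hb', rfl⟩ := intermediate_value_Icc hab hf ⟨hc.trans hcd.le, hd⟩
  refine ⟨a', b', ha'.1, ?_, hb'.2, rfl, rfl⟩
  by_contra! hba
  exact (hmono hb' ha' hba.le).not_gt hcd

def WideInterval (lam A δ : ℝ) (k : ℕ) (I : ℝ × ℝ) : Prop :=
  A ≤ I.1 ∧ I.1 ≤ I.2 ∧ 1 + 2 * δ ≤ lam * (I.2 ^ (k + 1) - I.1 ^ (k + 1))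

theorem WideInterval.exists_succ {lam A δ : ℝ} {k : ℕ} {I : ℝ × ℝ}
    (hI : WideInterval lam A δ k I) (hlam : 0 ≤ lam) (hA : 0 ≤ A) (hδ : 0 < δ)
    (hgrow : 1 + 2 * δ ≤ A * (2 * δ)) (t : ℝ) :
    ∃ J, WideInterval lam A δ (k + 1) J ∧ Icc J.1 J.2 ⊆ Icc I.1 I.2 ∧
      ∀ x ∈ Icc J.1 J.2, distNearestInt (lam * x ^ (k + 1) - t) ≤ δ := by
  obtain ⟨a, b⟩ := I
  obtain ⟨hAa, hab, hwide⟩ := hI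
  dsimp only at hAa hab hwide ⊢
  set f : ℝ → ℝ := fun x => lam * x ^ (k + 1) with hf
  have hmono : MonotoneOn f (Icc a b) := fun x hx y _ hxy =>
    mul_le_mul_of_nonneg_left (pow_le_pow_left₀ (hA.trans (hAa.trans hx.1)) hxy _) hlam
  obtain ⟨m, hm₁, hm₂⟩ := exists_int_add_Icc_subset (t := t) (δ := δ) (u := f a) (v := f b)
    (by simp only [hf]; linarith)
  obtain ⟨a', b', haa', hab', hbb', hfa', hfb'⟩ := exists_Icc_subset_eq_of_monotoneOn hab
    (by fun_prop) hmono (by linarith : (m + t - δ : ℝ) < m + t + δ) hm₁ hm₂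
  have hAa' : A ≤ a' := hAa.trans haa'
  refine ⟨(a', b'), ⟨hAa', hab', ?_⟩, Icc_subset_Icc haa' hbb', ?_⟩
  · have hlen : lam * (b' ^ (k + 1) - a' ^ (k + 1)) = 2 * δ := by
      simp only [hf] at hfa' hfb'; linarith
    have hgap := mul_sub_pow_le_sub_pow_succ (hA.trans hAa') hab' (k + 1)
    calc 1 + 2 * δ ≤ A * (2 * δ) := hgrow
      _ ≤ a' * (lam * (b' ^ (k + 1) - a' ^ (k + 1))) := by
        rw [hlen]; exact mul_le_mul_of_nonneg_right hAa' (by positivity)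
      _ = lam * (a' * (b' ^ (k + 1) - a' ^ (k + 1))) := by ring
      _ ≤ lam * (b' ^ (k + 1 + 1) - a' ^ (k + 1 + 1)) := mul_le_mul_of_nonneg_left hgap hlam
  · intro x hx
    have hsub : Icc a' b' ⊆ Icc a b := Icc_subset_Icc haa' hbb'
    have hxa := hmono (hsub ⟨le_rfl, hab'⟩) (hsub hx) hx.1
    have hxb := hmono (hsub hx) (hsub ⟨hab', le_rfl⟩) hx.2
    refine (distNearestInt_le_abs_sub_intCast _ m).trans (abs_le.2 ⟨?_, ?_⟩) <;>
      simp only [hf] at hxa hxb hfa' hfb' <;> linarith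

theorem lambda_alpha_pow_close_to_sequence
    (θ : ℕ → ℝ) (lam A : ℝ) (hlam : 0 < lam) (hA : 1 < A) :
    ∃ α : ℝ, A ≤ α ∧ α ≤ A + A / (lam * (A - 1)) ∧
      ∀ n : ℕ, 1 ≤ n → distNearestInt (lam * α ^ n - θ n) ≤ 1 / (2 * (A - 1)) := by
  have hA₁ : 0 < A - 1 := by linarith
  set δ := 1 / (2 * (A - 1))
  have hδ : 0 < δ := by positivity
  have hgrow : 1 + 2 * δ = A * (2 * δ) := by simp only [δ]; field_simp; ring
  have hbase : WideInterval lam A δ 0 (A, A + A / (lam * (A - 1))) := by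
    refine ⟨le_rfl, le_add_of_nonneg_right (by positivity), le_of_eq ?_⟩
    simp only [δ, zero_add, pow_one]; field_simp; ring
  obtain ⟨I, hI₀, hI⟩ := exists_seq_of_forall_exists_succ hbase fun k _ hJ =>
    hJ.exists_succ hlam.le (by linarith) hδ hgrow.le (θ (k + 1))
  have hnested := mem_iInter.1 <| ciSup_mem_iInter_Icc_of_antitone_Icc
    (antitone_nat_of_succ_le fun k => (hI k).2.1) fun k => (hI k).1.2.1
  refine ⟨⨆ k, (I k).1, ?_, ?_, ?_⟩
  · simpa [hI₀] using (hI 0).1.1.trans (hnested 0).1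
  · simpa [hI₀] using (hnested 0).2
  · rintro (_ | k) hn
    · omega
    · exact (hI k).2.2 _ (hnested (k + 1))
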